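/- In the system C2_O: (a) if Γ ⊢ t : O(a) and t ≻_C t', then t = t'; (b) if Γ = y₁:A₁,…,yₙ:Aₙ, x₁:O(a₁),…,xₘ:O(aₘ) ⊢ t : O(a) and none of the Aᵢ ends with O, then t is one of the variables xᵢ and aᵢ ≈ a. (Lemma 5.2) -/

import Mathlib

namespace MixedLogic

/-! ### First-order terms of the language (constant 0, unary successor s) -/

inductive Trm : Type
  | var  : ℕ → Trm
  | zero : Trm
  | succ : Trm → Trm

def Trm.subst : Trm → ℕ → Trm → Trm
  | .var y, x, u => if y = x then u else .var y
  | .zero, _, _ => .zero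
  | .succ t, x, u => .succ (t.subst x u)

def Trm.fv : Trm → Set ℕ
  | .var y => {y}
  | .zero => ∅
  | .succ t => t.fv

/-- the term sⁿ(0) -/
def Trm.num : ℕ → Trm
  | 0 => .zero
  | n + 1 => .succ (Trm.num n)

/-- `TrmEq E a b` : the equation a = b is a consequence of the set of equations E. -/
inductive TrmEq (E : Set (Trm × Trm)) : Trm → Trm → Prop
  | ax {a b} : (a, b) ∈ E → TrmEq E a b
  | refl (a) : TrmEq E a a
  | symm {a b} : TrmEq E a b → TrmEq E b a
  | trans {a b c} : TrmEq E a b → TrmEq E b c → TrmEq E a c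
  | succ_congr {a b} : TrmEq E a b → TrmEq E (.succ a) (.succ b)
  | subst {a b} (x : ℕ) (u : Trm) : TrmEq E a b → TrmEq E (a.subst x u) (b.subst x u)

/-- E is adequate with the type of integers. -/
def Adequate (E : Set (Trm × Trm)) : Prop :=
  (∀ a, ¬ TrmEq E (.succ a) .zero) ∧ ∀ a b, TrmEq E (.succ a) (.succ b) → TrmEq E a b

/-- Indices of ordinary second-order variables.  The variables `Sum.inr n` are the
reserved *special* variables: `Sum.inr n` is the variable `X*` associated with the
classical variable `n` by the Gödel translation. -/
abbrev PIdx : Type := ℕ ⊕ ℕ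

/-! ### Formulas (= types) -/

inductive Fm : Type
  | bot   : Fm
  | pvar  : PIdx → List Trm → Fm     -- ordinary second-order (predicate) variable
  | cvar  : ℕ → List Trm → Fm        -- classical second-order variable X_C
  | psym  : ℕ → List Trm → Fm        -- predicate symbol of the language (psym 0 is O)
  | arr   : Fm → Fm → Fm
  | fall  : ℕ → Fm → Fm              -- first-order ∀
  | Fall  : PIdx → Fm → Fm           -- second-order ∀ over an ordinary variable
  | CFall : ℕ → Fm → Fm              -- second-order ∀ over a classical variable

def Fm.neg (A : Fm) : Fm := A.arr .bot

/-- substitution of a first-order term for a first-order variable -/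
def Fm.substT : Fm → ℕ → Trm → Fm
  | .bot, _, _ => .bot
  | .pvar X ts, x, u => .pvar X (ts.map (Trm.subst · x u))
  | .cvar X ts, x, u => .cvar X (ts.map (Trm.subst · x u))
  | .psym P ts, x, u => .psym P (ts.map (Trm.subst · x u))
  | .arr A B, x, u => .arr (A.substT x u) (B.substT x u)
  | .fall y A, x, u => if y = x then .fall y A else .fall y (A.substT x u)
  | .Fall X A, x, u => .Fall X (A.substT x u)
  | .CFall X A, x, u => .CFall X (A.substT x u)

/-- A second-order substituend: a formula together with its list of
first-order parameters (for an n-ary second-order variable). -/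
abbrev Sop : Type := List ℕ × Fm

def Fm.msubstT (A : Fm) (xs : List ℕ) (ts : List Trm) : Fm :=
  (xs.zip ts).foldl (fun B p => B.substT p.1 p.2) A

/-- substitution of a formula (with parameters) for an ordinary second-order variable -/
def Fm.substP : Fm → PIdx → Sop → Fm
  | .bot, _, _ => .bot
  | .pvar Y ts, X, G => if Y = X then G.2.msubstT G.1 ts else .pvar Y ts
  | .cvar Y ts, _, _ => .cvar Y ts
  | .psym P ts, _, _ => .psym P ts
  | .arr A B, X, G => .arr (A.substP X G) (B.substP X G)
  | .fall y A, X, G => .fall y (A.substP X G)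
  | .Fall Y A, X, G => if Y = X then .Fall Y A else .Fall Y (A.substP X G)
  | .CFall Y A, X, G => .CFall Y (A.substP X G)

/-- substitution of a formula (with parameters) for a classical second-order variable -/
def Fm.substC : Fm → ℕ → Sop → Fm
  | .bot, _, _ => .bot
  | .pvar Y ts, _, _ => .pvar Y ts
  | .cvar Y ts, X, G => if Y = X then G.2.msubstT G.1 ts else .cvar Y ts
  | .psym P ts, _, _ => .psym P ts
  | .arr A B, X, G => .arr (A.substC X G) (B.substC X G)
  | .fall y A, X, G => .fall y (A.substC X G)
  | .Fall Y A, X, G => .Fall Y (A.substC X G)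
  | .CFall Y A, X, G => if Y = X then .CFall Y A else .CFall Y (A.substC X G)

/-! ### Free variables -/

def Fm.fvT : Fm → Set ℕ
  | .bot => ∅
  | .pvar _ ts => {x | ∃ t ∈ ts, x ∈ t.fv}
  | .cvar _ ts => {x | ∃ t ∈ ts, x ∈ t.fv}
  | .psym _ ts => {x | ∃ t ∈ ts, x ∈ t.fv}
  | .arr A B => A.fvT ∪ B.fvT
  | .fall y A => A.fvT \ {y}
  | .Fall _ A => A.fvT
  | .CFall _ A => A.fvT

def Fm.fvP : Fm → Set PIdx
  | .bot => ∅
  | .pvar X _ => {X}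
  | .cvar _ _ => ∅
  | .psym _ _ => ∅
  | .arr A B => A.fvP ∪ B.fvP
  | .fall _ A => A.fvP
  | .Fall X A => A.fvP \ {X}
  | .CFall _ A => A.fvP

def Fm.fvC : Fm → Set ℕ
  | .bot => ∅
  | .pvar _ _ => ∅
  | .cvar X _ => {X}
  | .psym _ _ => ∅
  | .arr A B => A.fvC ∪ B.fvC
  | .fall _ A => A.fvC
  | .Fall _ A => A.fvC
  | .CFall X A => A.fvC \ {X}

/-! ### Classes of formulas -/

inductive Fm.Atom : Fm → Prop
  | bot : Fm.Atom .bot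
  | pvar (X ts) : Fm.Atom (.pvar X ts)
  | cvar (X ts) : Fm.Atom (.cvar X ts)
  | psym (P ts) : Fm.Atom (.psym P ts)

/-- A classical type : a type ending with ⊥ or with a classical variable. -/
inductive Fm.IsClassical : Fm → Prop
  | bot : Fm.IsClassical .bot
  | cvar (X ts) : Fm.IsClassical (.cvar X ts)
  | arr (A) {B} : B.IsClassical → Fm.IsClassical (.arr A B)
  | fall (x) {A} : A.IsClassical → Fm.IsClassical (.fall x A)
  | Fall (X) {A} : A.IsClassical → Fm.IsClassical (.Fall X A)
  | CFall (X) {A} : A.IsClassical → Fm.IsClassical (.CFall X A)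

/-- a type ending with ⊥ -/
inductive Fm.EndsBot : Fm → Prop
  | bot : Fm.EndsBot .bot
  | arr (A) {B} : B.EndsBot → Fm.EndsBot (.arr A B)
  | fall (x) {A} : A.EndsBot → Fm.EndsBot (.fall x A)
  | Fall (X) {A} : A.EndsBot → Fm.EndsBot (.Fall X A)
  | CFall (X) {A} : A.EndsBot → Fm.EndsBot (.CFall X A)

/-- a type ending with the distinguished predicate symbol O (= psym 0) -/
inductive Fm.EndsO : Fm → Prop
  | psym (ts) : Fm.EndsO (.psym 0 ts)
  | arr (A) {B} : B.EndsO → Fm.EndsO (.arr A B)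
  | fall (x) {A} : A.EndsO → Fm.EndsO (.fall x A)
  | Fall (X) {A} : A.EndsO → Fm.EndsO (.Fall X A)
  | CFall (X) {A} : A.EndsO → Fm.EndsO (.CFall X A)

/-- formulas of AF2 / LAF2 / C2 / LC2 : no classical variables occur -/
def Fm.NoCVar : Fm → Prop
  | .bot => True
  | .pvar _ _ => True
  | .cvar _ _ => False
  | .psym _ _ => True
  | .arr A B => A.NoCVar ∧ B.NoCVar
  | .fall _ A => A.NoCVar
  | .Fall _ A => A.NoCVar
  | .CFall _ _ => False

/-- formulas of LM2 : none of the reserved special variables `X*` occurs -/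
def Fm.NoSpecial : Fm → Prop
  | .bot => True
  | .pvar X _ => X.isLeft = true
  | .cvar _ _ => True
  | .psym _ _ => True
  | .arr A B => A.NoSpecial ∧ B.NoSpecial
  | .fall _ A => A.NoSpecial
  | .Fall X A => X.isLeft = true ∧ A.NoSpecial
  | .CFall _ A => A.NoSpecial

/-- propositional formulas (system M) -/
def Fm.IsProp : Fm → Prop
  | .bot => True
  | .pvar _ ts => ts = []
  | .cvar _ ts => ts = []
  | .psym _ ts => ts = []
  | .arr A B => A.IsProp ∧ B.IsProp
  | .fall _ _ => False
  | .Fall _ A => A.IsProp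
  | .CFall _ A => A.IsProp

/-! ### The relations ⊲ and ≈ on formulas -/

/-- the relation ⊲ of AF2 -/
inductive SubAF2 : Fm → Fm → Prop
  | refl (A) : SubAF2 A A
  | trans {A B C} : SubAF2 A B → SubAF2 B C → SubAF2 A C
  | fallT (x A u) : SubAF2 (.fall x A) (A.substT x u)
  | fallP (X A G) : SubAF2 (.Fall X A) (A.substP X G)

/-- the relation ⊲ of M2 -/
inductive SubM2 : Fm → Fm → Prop
  | refl (A) : SubM2 A A
  | trans {A B C} : SubM2 A B → SubM2 B C → SubM2 A C
  | fallT (x A u) : SubM2 (.fall x A) (A.substT x u)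
  | fallP (X A G) : SubM2 (.Fall X A) (A.substP X G)
  | fallC (X A) {G : Sop} : G.2.IsClassical → SubM2 (.CFall X A) (A.substC X G)

/-- the relation ≈ on formulas (relative to the set of equations E) -/
inductive FmEq (E : Set (Trm × Trm)) : Fm → Fm → Prop
  | base (F : Fm) (x : ℕ) {u v : Trm} : TrmEq E u v → FmEq E (F.substT x u) (F.substT x v)
  | refl (A) : FmEq E A A
  | trans {A B C} : FmEq E A B → FmEq E B C → FmEq E A C

/-! ### ∀-positive and ∀-negative types -/

mutual
  /-- Ω⁺ : ∀-positive types -/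
  inductive Fm.Pos : Fm → Prop
    | atom {A} : A.Atom → Fm.Pos A
    | arr {A B} : Fm.Neg A → Fm.Pos B → Fm.Pos (.arr A B)
    | fall (x) {A} : Fm.Pos A → Fm.Pos (.fall x A)
    | Fall (X) {A} : Fm.Pos A → Fm.Pos (.Fall X A)
  /-- Ω⁻ : ∀-negative types -/
  inductive Fm.Neg : Fm → Prop
    | atom {A} : A.Atom → Fm.Neg A
    | arr {A B} : Fm.Pos A → Fm.Neg B → Fm.Neg (.arr A B)
    | fall (x) {A} : Fm.Neg A → Fm.Neg (.fall x A)
    | Fall (X) {A} : X ∉ A.fvP → Fm.Neg A → Fm.Neg (.Fall X A)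
end

/-! ### Gödel translation and classical translation -/

/-- the Gödel translation A* (each classical variable `n` is replaced,
negated, by its associated special variable `Sum.inr n`) -/
def Fm.godel : Fm → Fm
  | .bot => .bot
  | .pvar X ts => .pvar X ts
  | .cvar X ts => .arr (.pvar (Sum.inr X) ts) .bot
  | .psym P ts => .psym P ts
  | .arr A B => .arr A.godel B.godel
  | .fall x A => .fall x A.godel
  | .Fall X A => .Fall X A.godel
  | .CFall X A => .Fall (Sum.inr X) A.godel

/-- the index of the classical variable X_C associated with an ordinary variable X -/
def cIdx : PIdx → ℕ := Sum.elim (fun n => 2 * n) (fun n => 2 * n + 1)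

/-- the classical translation A^C -/
def Fm.ctrans : Fm → Fm
  | .bot => .bot
  | .pvar X ts => .cvar (cIdx X) ts
  | .cvar X ts => .cvar X ts
  | .psym P ts => .psym P ts
  | .arr A B => .arr A.ctrans B.ctrans
  | .fall x A => .fall x A.ctrans
  | .Fall X A => .CFall (cIdx X) A.ctrans
  | .CFall X A => .CFall X A.ctrans

/-! ### λC-terms -/

/-- λ-terms with the constant C and stack constants `k n` -/
inductive Lam : Type
  | var : ℕ → Lam
  | app : Lam → Lam → Lam
  | lam : ℕ → Lam → Lam
  | C   : Lam
  | k   : ℕ → Lam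

def Lam.fv : Lam → Set ℕ
  | .var x => {x}
  | .app t u => t.fv ∪ u.fv
  | .lam x t => t.fv \ {x}
  | .C => ∅
  | .k _ => ∅

def Lam.subst : Lam → ℕ → Lam → Lam
  | .var y, x, u => if y = x then u else .var y
  | .app a b, x, u => .app (a.subst x u) (b.subst x u)
  | .lam y a, x, u => if y = x then .lam y a else .lam y (a.subst x u)
  | .C, _, _ => .C
  | .k n, _, _ => .k n

/-- simultaneous substitution σ -/
def Lam.msubst : Lam → (ℕ → Lam) → Lam
  | .var y, σ => σ y
  | .app a b, σ => .app (a.msubst σ) (b.msubst σ)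
  | .lam y a, σ => .lam y (a.msubst (Function.update σ y (.var y)))
  | .C, _ => .C
  | .k n, _ => .k n

/-- (t)u₁…uₙ -/
def Lam.appL (t : Lam) (l : List Lam) : Lam := l.foldl .app t

/-- t contains no occurrence of the constant C -/
def Lam.NoC : Lam → Prop
  | .var _ => True
  | .app a b => a.NoC ∧ b.NoC
  | .lam _ a => a.NoC
  | .C => False
  | .k _ => True

/-- t is a λC-term (contains no stack constant) -/
def Lam.IsLC : Lam → Prop
  | .var _ => True
  | .app a b => a.IsLC ∧ b.IsLC
  | .lam _ a => a.IsLC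
  | .C => True
  | .k _ => False

def Lam.Closed (t : Lam) : Prop := ∀ x, x ∉ t.fv

/-- one step of β-reduction (anywhere in the term) -/
inductive BetaStep : Lam → Lam → Prop
  | beta (x t u) : BetaStep (.app (.lam x t) u) (t.subst x u)
  | appL {t t'} (u) : BetaStep t t' → BetaStep (.app t u) (.app t' u)
  | appR (t) {u u'} : BetaStep u u' → BetaStep (.app t u) (.app t u')
  | lam (x) {t t'} : BetaStep t t' → BetaStep (.lam x t) (.lam x t')

/-- β-reduction -/
def BetaRed : Lam → Lam → Prop := Relation.ReflTransGen BetaStep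

/-- β-equivalence ≃β -/
def BetaConv : Lam → Lam → Prop :=
  Relation.ReflTransGen (fun a b => BetaStep a b ∨ BetaStep b a)

/-- t is β-normal : it contains no β-redex -/
def BetaNormal (t : Lam) : Prop := ∀ u, ¬ BetaStep t u

/-- one step of head C-reduction -/
inductive HeadStep : Lam → Lam → Prop
  | beta (x t u l) :
      HeadStep (Lam.appL (.app (.lam x t) u) l) (Lam.appL (t.subst x u) l)
  | cc (t l x) : (∀ s ∈ l, x ∉ Lam.fv s) →
      HeadStep (Lam.appL (.app .C t) l) (.app t (.lam x (Lam.appL (.var x) l)))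

/-- head C-reduction ≻_C -/
def HeadRed : Lam → Lam → Prop := Relation.ReflTransGen HeadStep

/-- the Church integer n̲ = λxλf(f)ⁿx -/
def church (n : ℕ) : Lam := .lam 0 (.lam 1 ((Lam.app (.var 1))^[n] (.var 0)))

/-! ### The type systems -/

abbrev Ctx : Type := List (ℕ × Fm)

/-- the intuitionistic type system AF2 -/
inductive AF2 (E : Set (Trm × Trm)) : Ctx → Lam → Fm → Prop
  | ax {Γ x A} : (x, A) ∈ Γ → AF2 E Γ (.var x) A
  | arrI {Γ x A t B} : AF2 E ((x, A) :: Γ) t B → AF2 E Γ (.lam x t) (.arr A B)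
  | arrE {Γ t u A B} : AF2 E Γ t (.arr A B) → AF2 E Γ u A → AF2 E Γ (.app t u) B
  | fallTI {Γ t A} (x) : (∀ p ∈ Γ, x ∉ Fm.fvT p.2) → AF2 E Γ t A → AF2 E Γ t (.fall x A)
  | fallTE {Γ t x A} (u : Trm) : AF2 E Γ t (.fall x A) → AF2 E Γ t (A.substT x u)
  | fallPI {Γ t A} (X) : (∀ p ∈ Γ, X ∉ Fm.fvP p.2) → AF2 E Γ t A → AF2 E Γ t (.Fall X A)
  | fallPE {Γ t X A} (G : Sop) : AF2 E Γ t (.Fall X A) → AF2 E Γ t (A.substP X G)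
  | eqr {Γ t A x u v} : AF2 E Γ t (Fm.substT A x u) → TrmEq E u v → AF2 E Γ t (Fm.substT A x v)

/-- the classical type system C2 = AF2 + C : ∀X(¬¬X → X) -/
inductive C2 (E : Set (Trm × Trm)) : Ctx → Lam → Fm → Prop
  | ax {Γ x A} : (x, A) ∈ Γ → C2 E Γ (.var x) A
  | arrI {Γ x A t B} : C2 E ((x, A) :: Γ) t B → C2 E Γ (.lam x t) (.arr A B)
  | arrE {Γ t u A B} : C2 E Γ t (.arr A B) → C2 E Γ u A → C2 E Γ (.app t u) B
  | fallTI {Γ t A} (x) : (∀ p ∈ Γ, x ∉ Fm.fvT p.2) → C2 E Γ t A → C2 E Γ t (.fall x A)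
  | fallTE {Γ t x A} (u : Trm) : C2 E Γ t (.fall x A) → C2 E Γ t (A.substT x u)
  | fallPI {Γ t A} (X) : (∀ p ∈ Γ, X ∉ Fm.fvP p.2) → C2 E Γ t A → C2 E Γ t (.Fall X A)
  | fallPE {Γ t X A} (G : Sop) : C2 E Γ t (.Fall X A) → C2 E Γ t (A.substP X G)
  | eqr {Γ t A x u v} : C2 E Γ t (Fm.substT A x u) → TrmEq E u v → C2 E Γ t (Fm.substT A x v)
  | Cax (Γ) (X : PIdx) :
      C2 E Γ .C (.Fall X (.arr (.arr (.arr (.pvar X []) .bot) .bot) (.pvar X [])))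

/-- the mixed type system M2 = AF2 + classical variables + C : ∀X_C(¬¬X_C → X_C) -/
inductive M2 (E : Set (Trm × Trm)) : Ctx → Lam → Fm → Prop
  | ax {Γ x A} : (x, A) ∈ Γ → M2 E Γ (.var x) A
  | arrI {Γ x A t B} : M2 E ((x, A) :: Γ) t B → M2 E Γ (.lam x t) (.arr A B)
  | arrE {Γ t u A B} : M2 E Γ t (.arr A B) → M2 E Γ u A → M2 E Γ (.app t u) B
  | fallTI {Γ t A} (x) : (∀ p ∈ Γ, x ∉ Fm.fvT p.2) → M2 E Γ t A → M2 E Γ t (.fall x A)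
  | fallTE {Γ t x A} (u : Trm) : M2 E Γ t (.fall x A) → M2 E Γ t (A.substT x u)
  | fallPI {Γ t A} (X) : (∀ p ∈ Γ, X ∉ Fm.fvP p.2) → M2 E Γ t A → M2 E Γ t (.Fall X A)
  | fallPE {Γ t X A} (G : Sop) : M2 E Γ t (.Fall X A) → M2 E Γ t (A.substP X G)
  | fallCI {Γ t A} (X) : (∀ p ∈ Γ, X ∉ Fm.fvC p.2) → M2 E Γ t A → M2 E Γ t (.CFall X A)
  | fallCE {Γ t X A} (G : Sop) : G.2.IsClassical →
      M2 E Γ t (.CFall X A) → M2 E Γ t (A.substC X G)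
  | eqr {Γ t A x u v} : M2 E Γ t (Fm.substT A x u) → TrmEq E u v → M2 E Γ t (Fm.substT A x v)
  | Cax (Γ) (X : ℕ) :
      M2 E Γ .C (.CFall X (.arr (.arr (.arr (.cvar X []) .bot) .bot) (.cvar X [])))

/-- the type system C2_O : C2 with λ-abstraction restricted to types not ending
with O and second-order ∀-elimination restricted to types not ending with O -/
inductive C2O (E : Set (Trm × Trm)) : Ctx → Lam → Fm → Prop
  | ax {Γ x A} : (x, A) ∈ Γ → C2O E Γ (.var x) A
  | arrI {Γ x A t B} : ¬ A.EndsO → ¬ B.EndsO →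
      C2O E ((x, A) :: Γ) t B → C2O E Γ (.lam x t) (.arr A B)
  | arrE {Γ t u A B} : C2O E Γ t (.arr A B) → C2O E Γ u A → C2O E Γ (.app t u) B
  | fallTI {Γ t A} (x) : (∀ p ∈ Γ, x ∉ Fm.fvT p.2) → C2O E Γ t A → C2O E Γ t (.fall x A)
  | fallTE {Γ t x A} (u : Trm) : C2O E Γ t (.fall x A) → C2O E Γ t (A.substT x u)
  | fallPI {Γ t A} (X) : (∀ p ∈ Γ, X ∉ Fm.fvP p.2) → C2O E Γ t A → C2O E Γ t (.Fall X A)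
  | fallPE {Γ t X A} (G : Sop) : ¬ G.2.EndsO →
      C2O E Γ t (.Fall X A) → C2O E Γ t (A.substP X G)
  | eqr {Γ t A x u v} : C2O E Γ t (Fm.substT A x u) → TrmEq E u v → C2O E Γ t (Fm.substT A x v)
  | Cax (Γ) (X : PIdx) :
      C2O E Γ .C (.Fall X (.arr (.arr (.arr (.pvar X []) .bot) .bot) (.pvar X [])))

/-- the propositional type system M (propositional fragment of M2) -/
inductive Mprop : Ctx → Lam → Fm → Prop
  | ax {Γ x A} : Fm.IsProp A → (x, A) ∈ Γ → Mprop Γ (.var x) A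
  | arrI {Γ x A t B} : Fm.IsProp A → Mprop ((x, A) :: Γ) t B → Mprop Γ (.lam x t) (.arr A B)
  | arrE {Γ t u A B} : Mprop Γ t (.arr A B) → Mprop Γ u A → Mprop Γ (.app t u) B
  | fallPI {Γ t A} (X) : (∀ p ∈ Γ, X ∉ Fm.fvP p.2) → Mprop Γ t A → Mprop Γ t (.Fall X A)
  | fallPE {Γ t X A} (G : Fm) : G.IsProp →
      Mprop Γ t (.Fall X A) → Mprop Γ t (A.substP X ([], G))
  | fallCI {Γ t A} (X) : (∀ p ∈ Γ, X ∉ Fm.fvC p.2) → Mprop Γ t A → Mprop Γ t (.CFall X A)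
  | fallCE {Γ t X A} (G : Fm) : G.IsProp → G.IsClassical →
      Mprop Γ t (.CFall X A) → Mprop Γ t (A.substC X ([], G))
  | Cax (Γ) (X : ℕ) :
      Mprop Γ .C (.CFall X (.arr (.arr (.arr (.cvar X []) .bot) .bot) (.cvar X [])))

/-! ### The underlying logics -/

def toCtx (Γ : List Fm) : Ctx := Γ.zipIdx.map Prod.swap

/-- provability in the intuitionistic second-order logic LAF2 -/
def LAF2Prov (E : Set (Trm × Trm)) (Γ : List Fm) (A : Fm) : Prop :=
  ∃ t, AF2 E (toCtx Γ) t A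

/-- provability in the classical second-order logic LC2 -/
def LC2Prov (E : Set (Trm × Trm)) (Γ : List Fm) (A : Fm) : Prop :=
  ∃ t, C2 E (toCtx Γ) t A

/-- provability in the mixed logic LM2 -/
def LM2Prov (E : Set (Trm × Trm)) (Γ : List Fm) (A : Fm) : Prop :=
  ∃ t, M2 E (toCtx Γ) t A

/-! ### The types of the integers -/

/-- N[a] = ∀X{X(0), ∀y(X(y) → X(sy)) → X(a)} -/
def NatF (a : Trm) : Fm :=
  .Fall (Sum.inl 0)
    (.arr (.pvar (Sum.inl 0) [Trm.zero])
      (.arr (.fall 1 (.arr (.pvar (Sum.inl 0) [Trm.var 1])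
                           (.pvar (Sum.inl 0) [Trm.succ (Trm.var 1)])))
        (.pvar (Sum.inl 0) [a])))

/-- N^C[a] = ∀X_C{X_C(0), ∀y(X_C(y) → X_C(sy)) → X_C(a)} -/
def NatC (a : Trm) : Fm :=
  .CFall 0
    (.arr (.cvar 0 [Trm.zero])
      (.arr (.fall 1 (.arr (.cvar 0 [Trm.var 1])
                           (.cvar 0 [Trm.succ (Trm.var 1)])))
        (.cvar 0 [a])))

/-- N = ∀X{X, (X → X) → X} -/
def NatP : Fm :=
  .Fall (Sum.inl 0)
    (.arr (.pvar (Sum.inl 0) [])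
      (.arr (.arr (.pvar (Sum.inl 0) []) (.pvar (Sum.inl 0) []))
        (.pvar (Sum.inl 0) [])))

/-- N^C = ∀X_C{X_C, (X_C → X_C) → X_C} -/
def NatPC : Fm :=
  .CFall 0
    (.arr (.cvar 0 [])
      (.arr (.arr (.cvar 0 []) (.cvar 0 []))
        (.cvar 0 [])))

/-- a classical integer of value n (in C2): a closed λC-term of type N[sⁿ(0)] -/
def ClassIntC2 (E : Set (Trm × Trm)) (n : ℕ) (θ : Lam) : Prop :=
  θ.IsLC ∧ θ.Closed ∧ C2 E [] θ (NatF (Trm.num n))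

/-- a classical integer of value n (in M2): a closed λC-term of type N^C[sⁿ(0)] -/
def ClassIntM2 (E : Set (Trm × Trm)) (n : ℕ) (θ : Lam) : Prop :=
  θ.IsLC ∧ θ.Closed ∧ M2 E [] θ (NatC (Trm.num n))

/-! Only the axiom rule can give a term a type ending with `O`: →-introduction is forbidden
for such types, the type of `C` ends with a variable, and the ∀-rules and the rule for `≈`
preserve ending with `O` (an instantiation is never by a type ending with `O`). Hence a term
whose type ends with `O` is a variable applied to arguments, so it is head normal. If moreover
the only declarations ending with `O` are atomic, `O(b)`, then the derivation is a variable
`x : O(b)` followed by ∀-introductions, ∀-eliminations and `≈`-steps, which keep the type of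
the shape `∀…O(c)` with `c ≈ b`; in particular no application is possible. -/

namespace Fm

@[simp] lemma not_endsO_bot : ¬ (bot).EndsO := fun h => nomatch h
@[simp] lemma not_endsO_pvar {X : PIdx} {ts : List Trm} : ¬ (pvar X ts).EndsO := fun h => nomatch h
@[simp] lemma not_endsO_cvar {X : ℕ} {ts : List Trm} : ¬ (cvar X ts).EndsO := fun h => nomatch h

@[simp] lemma endsO_psym {P : ℕ} {ts : List Trm} : (psym P ts).EndsO ↔ P = 0 :=
  ⟨fun h => by cases h; rfl, fun h => h ▸ .psym ts⟩

@[simp] lemma endsO_arr {A B : Fm} : (arr A B).EndsO ↔ B.EndsO :=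
  ⟨fun h => by cases h; assumption, .arr A⟩

@[simp] lemma endsO_fall {x : ℕ} {A : Fm} : (fall x A).EndsO ↔ A.EndsO :=
  ⟨fun h => by cases h; assumption, .fall x⟩

@[simp] lemma endsO_Fall {X : PIdx} {A : Fm} : (Fall X A).EndsO ↔ A.EndsO :=
  ⟨fun h => by cases h; assumption, .Fall X⟩

@[simp] lemma endsO_CFall {X : ℕ} {A : Fm} : (CFall X A).EndsO ↔ A.EndsO :=
  ⟨fun h => by cases h; assumption, .CFall X⟩

@[simp] lemma endsO_substT {A : Fm} {x : ℕ} {u : Trm} : (A.substT x u).EndsO ↔ A.EndsO := by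
  induction A with
  | fall y A ih => simp only [substT]; split <;> simp [ih]
  | _ => simp_all [substT]

@[simp] lemma endsO_msubstT {A : Fm} {xs : List ℕ} {ts : List Trm} :
    (A.msubstT xs ts).EndsO ↔ A.EndsO := by
  unfold msubstT
  induction xs.zip ts generalizing A with
  | nil => rfl
  | cons p l ih => rw [List.foldl_cons, ih, endsO_substT]

lemma EndsO.of_substP {A : Fm} {X : PIdx} {G : Sop} (hG : ¬ G.2.EndsO)
    (h : (A.substP X G).EndsO) : A.EndsO := by
  induction A with
  | pvar Y ts =>
    simp only [substP] at h
    split at h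
    · exact absurd (endsO_msubstT.mp h) hG
    · exact h
  | Fall Y A ih =>
    simp only [substP] at h
    split at h
    · exact h
    · exact endsO_Fall.mpr (ih (endsO_Fall.mp h))
  | _ => simp_all [substP]

end Fm

lemma Trm.subst_eq_self {b : Trm} {x : ℕ} (u : Trm) (h : x ∉ b.fv) : b.subst x u = b := by
  induction b with
  | var y => simp_all [Trm.fv, Trm.subst, eq_comm]
  | zero => rfl
  | succ t ih => simp_all [Trm.fv, Trm.subst]

lemma TrmEq.subst_right {E : Set (Trm × Trm)} (c : Trm) (x : ℕ) {u v : Trm}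
    (h : TrmEq E u v) : TrmEq E (c.subst x u) (c.subst x v) := by
  induction c with
  | var y =>
    simp only [Trm.subst]
    split
    · exact h
    · exact .refl _
  | zero => exact .refl _
  | succ c ih => exact .succ_congr ih

inductive HeadVar : Lam → Prop
  | var (x : ℕ) : HeadVar (.var x)
  | app {t : Lam} (u : Lam) : HeadVar t → HeadVar (.app t u)

lemma HeadVar.of_appL {s : Lam} {l : List Lam} (h : HeadVar (s.appL l)) : HeadVar s := by
  induction l generalizing s with
  | nil => exact h
  | cons a l ih =>
    cases ih (s := .app s a) h with
    | app _ hs => exact hs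

lemma HeadVar.not_headStep {t u : Lam} (h : HeadVar t) : ¬ HeadStep t u := by
  rintro (⟨x, s, w, l⟩ | ⟨s, l, x, -⟩) <;>
  · cases h.of_appL with
    | app _ h' => cases h'

lemma HeadVar.eq_of_headRed {t t' : Lam} (h : HeadVar t) (hr : HeadRed t t') : t = t' := by
  rcases hr.cases_head with rfl | ⟨_, hstep, -⟩
  · rfl
  · exact absurd hstep h.not_headStep

lemma C2O.headVar {E : Set (Trm × Trm)} {Γ : Ctx} {t : Lam} {B : Fm} (d : C2O E Γ t B)
    (hB : B.EndsO) : HeadVar t := by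
  induction d with
  | ax _ => exact .var _
  | arrI _ hB' _ _ => exact absurd (Fm.endsO_arr.mp hB) hB'
  | arrE _ _ ih _ => exact .app _ (ih (Fm.endsO_arr.mpr hB))
  | fallTI _ _ _ ih => exact ih (Fm.endsO_fall.mp hB)
  | fallTE _ _ ih => exact ih (Fm.endsO_fall.mpr (Fm.endsO_substT.mp hB))
  | fallPI _ _ _ ih => exact ih (Fm.endsO_Fall.mp hB)
  | fallPE _ hG _ ih => exact ih (Fm.endsO_Fall.mpr (hB.of_substP hG))
  | eqr _ _ ih => exact ih (Fm.endsO_substT.mpr (Fm.endsO_substT.mp hB))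
  | Cax => simp at hB

section AtomicO

variable {E : Set (Trm × Trm)} {b : Trm}

/-- The types that a variable declared `x : O(b)` can receive in C2_O. -/
inductive OInst (E : Set (Trm × Trm)) (b : Trm) : Fm → Prop
  | psym {c : Trm} : TrmEq E b c → OInst E b (.psym 0 [c])
  | fall {x : ℕ} {A : Fm} : x ∉ b.fv → OInst E b A → OInst E b (.fall x A)
  | Fall (X : PIdx) {A : Fm} : OInst E b A → OInst E b (.Fall X A)

lemma OInst.substT {A : Fm} {x : ℕ} (u : Trm) (hx : x ∉ b.fv) (h : OInst E b A) :
    OInst E b (A.substT x u) := by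
  induction h with
  | psym hbc =>
    have := TrmEq.subst (E := E) x u hbc
    rw [Trm.subst_eq_self u hx] at this
    exact .psym this
  | @fall y _ hy _ ih =>
    simp only [Fm.substT]
    split
    · exact .fall hy ‹_›
    · exact .fall hy ih
  | Fall X _ ih => exact .Fall X ih

lemma OInst.substP {A : Fm} {X : PIdx} (G : Sop) (h : OInst E b A) :
    OInst E b (A.substP X G) := by
  induction h with
  | psym hbc => exact .psym hbc
  | fall hy _ ih => exact .fall hy ih
  | Fall Y _ ih =>
    simp only [Fm.substP]
    split
    · exact .Fall Y ‹_›
    · exact .Fall Y ih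

lemma OInst.psym_inv {P : ℕ} {ts : List Trm} (h : OInst E b (.psym P ts)) :
    P = 0 ∧ ∃ c, ts = [c] ∧ TrmEq E b c := by
  cases h with
  | psym hbc => exact ⟨rfl, _, rfl, hbc⟩

lemma OInst.eqr {A : Fm} {x : ℕ} {u v : Trm} (h : OInst E b (A.substT x u))
    (huv : TrmEq E u v) : OInst E b (A.substT x v) := by
  induction A with
  | psym P ts =>
    obtain ⟨rfl, _, hts, hbc⟩ := h.psym_inv
    obtain ⟨c, rfl, rfl⟩ := List.map_eq_singleton_iff.mp hts
    exact .psym (hbc.trans (TrmEq.subst_right c x huv))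
  | fall y A ih =>
    by_cases hy : y = x
    · simpa only [Fm.substT, if_pos hy] using h
    · simp only [Fm.substT, if_neg hy] at h ⊢
      cases h with
      | fall hy hA => exact .fall hy (ih hA)
  | Fall Y A ih =>
    cases h with
    | Fall _ hA => exact .Fall Y (ih hA)
  | _ => cases h

lemma OInst.not_arr {A B : Fm} : ¬ OInst E b (.arr A B) := nofun

lemma C2O.exists_oInst {Γ : Ctx} {t : Lam} {B : Fm} (d : C2O E Γ t B)
    (hΓ : ∀ p ∈ Γ, p.2.EndsO → ∃ c, p.2 = .psym 0 [c]) (hB : B.EndsO) :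
    ∃ p ∈ Γ, t = .var p.1 ∧ ∃ c, p.2 = .psym 0 [c] ∧ OInst E c B := by
  induction d with
  | ax hmem =>
    obtain ⟨c, hc⟩ := hΓ _ hmem hB
    subst hc
    exact ⟨_, hmem, rfl, c, rfl, .psym (.refl c)⟩
  | arrI _ hB' _ _ => exact absurd (Fm.endsO_arr.mp hB) hB'
  | arrE _ _ ih _ =>
    obtain ⟨_, _, _, _, _, hA⟩ := ih hΓ (Fm.endsO_arr.mpr hB)
    exact absurd hA OInst.not_arr
  | fallTI x hx _ ih =>
    obtain ⟨p, hp, rfl, c, hc, hA⟩ := ih hΓ (Fm.endsO_fall.mp hB)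
    have hxc : x ∉ c.fv := by simpa [hc, Fm.fvT] using hx p hp
    exact ⟨p, hp, rfl, c, hc, .fall hxc hA⟩
  | fallTE u _ ih =>
    obtain ⟨p, hp, rfl, c, hc, hA⟩ := ih hΓ (Fm.endsO_fall.mpr (Fm.endsO_substT.mp hB))
    cases hA with
    | fall hxc hA => exact ⟨p, hp, rfl, c, hc, hA.substT u hxc⟩
  | fallPI X _ _ ih =>
    obtain ⟨p, hp, rfl, c, hc, hA⟩ := ih hΓ (Fm.endsO_Fall.mp hB)
    exact ⟨p, hp, rfl, c, hc, .Fall X hA⟩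
  | fallPE G hG _ ih =>
    obtain ⟨p, hp, rfl, c, hc, hA⟩ := ih hΓ (Fm.endsO_Fall.mpr (hB.of_substP hG))
    cases hA with
    | Fall _ hA => exact ⟨p, hp, rfl, c, hc, hA.substP G⟩
  | eqr _ huv ih =>
    obtain ⟨p, hp, rfl, c, hc, hA⟩ := ih hΓ (Fm.endsO_substT.mpr (Fm.endsO_substT.mp hB))
    exact ⟨p, hp, rfl, c, hc, hA.eqr huv⟩
  | Cax => simp at hB

end AtomicO

/-- **Lemma 5.2** : in the system C2_O,
(a) a term of type O(a) is head-normal : if Γ ⊢ t : O(a) and t ≻_C t' then t = t' ;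
(b) if Γ = y₁:A₁,…,yₙ:Aₙ, x₁:O(a₁),…,xₘ:O(aₘ) ⊢ t : O(a) with no Aᵢ ending with O,
then t is one of the xᵢ and aᵢ ≈ a. -/
theorem C2O_O_atomic (E : Set (Trm × Trm)) (hE : Adequate E) :
    (∀ (Γ : Ctx) (t t' : Lam) (a : Trm),
      C2O E Γ t (.psym 0 [a]) → HeadRed t t' → t = t') ∧
    (∀ (Γ₁ Γ₂ : Ctx) (t : Lam) (a : Trm),
      (∀ p ∈ Γ₁, ¬ Fm.EndsO p.2) →
      (∀ p ∈ Γ₂, ∃ b, p.2 = Fm.psym 0 [b]) →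
      C2O E (Γ₁ ++ Γ₂) t (.psym 0 [a]) →
      ∃ p ∈ Γ₂, t = .var p.1 ∧ ∃ b, p.2 = Fm.psym 0 [b] ∧ TrmEq E b a) := by
  refine ⟨fun Γ t t' a d => (d.headVar (.psym [a])).eq_of_headRed, ?_⟩
  intro Γ₁ Γ₂ t a h₁ h₂ d
  have hΓ : ∀ p ∈ Γ₁ ++ Γ₂, p.2.EndsO → ∃ c, p.2 = .psym 0 [c] := fun p hp hO =>
    (List.mem_append.mp hp).elim (fun hp₁ => absurd hO (h₁ p hp₁)) (h₂ p)
  obtain ⟨p, hp, rfl, c, hc, hA⟩ := d.exists_oInst hΓ (.psym [a])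
  obtain ⟨-, _, ⟨⟩, hca⟩ := hA.psym_inv
  have hp₂ : p ∈ Γ₂ := (List.mem_append.mp hp).resolve_left fun hp₁ => h₁ p hp₁ (by simp [hc])
  exact ⟨p, hp₂, rfl, c, hc, hca⟩

end MixedLogic
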